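/- Let {I_u, J_u}_{u∈V} be a nest representation of a finite digraph D = (V,E) in which every interval has positive length, let p_v ∈ J_v be pairwise distinct points, and order V by u ≤ v iff p_u ≤ p_v. Then for all vertices u ≤ v ≤ w ≤ z, if uw ∈ E and vz ∈ E, then vw ∈ E or uz ∈ E. -/

import Mathlib

/-!
Write `I_u = [aI u, bI u]` and `J_u = [aJ u, bJ u]`. The arc `uv` exists iff `aI u ≤ bJ v` and
`aJ v ≤ bI u`, and the first condition is automatic when `p u ≤ p v`, because
`aI u ≤ p u ≤ p v ≤ bJ v`. So for `u ≤ v ≤ w ≤ z` only the second condition matters: either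
`aJ w ≤ bI v`, giving `vw`, or `aJ z ≤ bI v < aJ w ≤ bI u`, giving `uz`.
-/

/-- A nest representation of a digraph `E`: closed bounded (nonempty) real intervals
`I_u = [aI u, bI u]` and `J_u = [aJ u, bJ u]` with `J_u ⊆ I_u` for every vertex `u`,
such that `u → v` is an arc iff `I_u ∩ J_v ≠ ∅`. -/
def IsNestRepresentation {V : Type*} (E : V → V → Prop)
    (aI bI aJ bJ : V → ℝ) : Prop :=
  (∀ u, aI u ≤ bI u) ∧ (∀ u, aJ u ≤ bJ u) ∧
  (∀ u, Set.Icc (aJ u) (bJ u) ⊆ Set.Icc (aI u) (bI u)) ∧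
  (∀ u v, E u v ↔ (Set.Icc (aI u) (bI u) ∩ Set.Icc (aJ v) (bJ v)).Nonempty)

/-- An interval nest digraph is one admitting a nest representation. -/
def IsIntervalNestDigraph {V : Type*} (E : V → V → Prop) : Prop :=
  ∃ aI bI aJ bJ : V → ℝ, IsNestRepresentation E aI bI aJ bJ

/-- The arc `uv` is symmetric: both `uv` and `vu` are arcs. -/
def SymArc {V : Type*} (E : V → V → Prop) (u v : V) : Prop := E u v ∧ E v u

/-- A nest ordering of a digraph `E`: a linear order `le` on the vertices such that
for all `u ≤ v ≤ w ≤ z` (repetitions allowed) properties (i), (ii), (iii) hold. -/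
def IsNestOrdering {V : Type*} (E : V → V → Prop) (le : V → V → Prop) : Prop :=
  IsLinearOrder V le ∧
  ∀ u v w z : V, le u v → le v w → le w z →
    ((E u w ∧ E u z → E u v ∨ (SymArc E v w ∧ SymArc E v z ∧ SymArc E w z)) ∧
     (E z u ∧ E z v → E z w ∨ (SymArc E w u ∧ SymArc E v u ∧ SymArc E w v)) ∧
     (E u z ∧ E v w → E u w ∨ E v z) ∧
     (E z u ∧ E w v → E z v ∨ E w u) ∧
     (E u w ∧ E v z → E v w ∨ E u z) ∧
     (E z v ∧ E w u → E z u ∨ E w v))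

theorem Set.Icc_inter_Icc_nonempty_iff {α : Type*} [LinearOrder α] {a b c d : α}
    (hab : a ≤ b) (hcd : c ≤ d) : (Set.Icc a b ∩ Set.Icc c d).Nonempty ↔ a ≤ d ∧ c ≤ b := by
  rw [Set.Icc_inter_Icc, Set.nonempty_Icc, sup_le_iff, le_inf_iff, le_inf_iff]
  tauto

namespace IsNestRepresentation

variable {V : Type*} {E : V → V → Prop} {aI bI aJ bJ : V → ℝ}

theorem arc_iff (hrep : IsNestRepresentation E aI bI aJ bJ) (u v : V) :
    E u v ↔ aI u ≤ bJ v ∧ aJ v ≤ bI u := by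
  rw [hrep.2.2.2, Set.Icc_inter_Icc_nonempty_iff (hrep.1 u) (hrep.2.1 v)]

theorem arc_iff_of_point_le (hrep : IsNestRepresentation E aI bI aJ bJ) {p : V → ℝ}
    (hp : ∀ v, p v ∈ Set.Icc (aJ v) (bJ v)) {u v : V} (huv : p u ≤ p v) :
    E u v ↔ aJ v ≤ bI u := by
  have haI : aI u ≤ p u := (hrep.2.2.1 u (hp u)).1
  rw [hrep.arc_iff, and_iff_right (haI.trans (huv.trans (hp v).2))]

end IsNestRepresentation

theorem nest_point_order_property_iii_general
    {V : Type*} (E : V → V → Prop)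
    (aI bI aJ bJ : V → ℝ)
    (hrep : IsNestRepresentation E aI bI aJ bJ)
    (p : V → ℝ) (hp : ∀ v, p v ∈ Set.Icc (aJ v) (bJ v)) :
    ∀ u v w z : V, p u ≤ p v → p v ≤ p w → p w ≤ p z →
      E u w → E v z → E v w ∨ E u z := by
  intro u v w z huv hvw hwz huw hvz
  rcases le_or_gt (aJ w) (bI v) with hwv | hgap
  · exact Or.inl <| (hrep.arc_iff_of_point_le hp hvw).2 hwv
  · refine Or.inr <| (hrep.arc_iff_of_point_le hp (huv.trans hvw |>.trans hwz)).2 ?_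
    calc aJ z ≤ bI v := ((hrep.arc_iff v z).1 hvz).2
      _ ≤ aJ w := hgap.le
      _ ≤ bI u := ((hrep.arc_iff u w).1 huw).2

/-- In a nest representation with positive-length intervals, ordering vertices by
chosen pairwise distinct points `p v ∈ J_v`: if `u ≤ v ≤ w ≤ z`, `uw ∈ E` and
`vz ∈ E`, then `vw ∈ E` or `uz ∈ E`. -/
theorem nest_point_order_property_iii
    {V : Type*} [Fintype V] (E : V → V → Prop)
    (aI bI aJ bJ : V → ℝ)
    (hrep : IsNestRepresentation E aI bI aJ bJ)
    (hposI : ∀ u, aI u < bI u) (hposJ : ∀ u, aJ u < bJ u)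
    (p : V → ℝ) (hp : ∀ v, p v ∈ Set.Icc (aJ v) (bJ v))
    (hinj : Function.Injective p) :
    ∀ u v w z : V, p u ≤ p v → p v ≤ p w → p w ≤ p z →
      E u w → E v z → E v w ∨ E u z :=
  nest_point_order_property_iii_general E aI bI aJ bJ hrep p hp
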